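/- arXiv:0909.5632 — 2 statements merged into one kernel-verified Lean document; each statement's English description precedes it below -/
import Mathlib

section
/- Let Q be weakly log-convex of moderate growth with constant C̃ := sup_{k,j}((k+j)!Q_{k+j}/(k!Q_k·j!Q_j))^{1/(k+j)} < ∞, and let L ≥ Q be weakly log-convex non-quasianalytic with L_0 = 1. Define L'_k by k!L'_k := C̃^k · min{ j!L_j · (k−j)!L_{k−j} : 0 ≤ j ≤ k }. Then: (a) L' ≥ Q; (b) k!L'_k is log-convex; (c) L'_{j+k} ≤ C̃^{j+k} L_j L_k for all j,k; (d) L' is non-quasianalytic. -/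
/-- `M` is weakly log-convex: `k ↦ log (k! M k)` is convex. -/
def WeaklyLogConvex (M : ℕ → ℝ) : Prop :=
  ∀ k, (((k + 1).factorial : ℝ) * M (k + 1)) ^ 2 ≤
    ((k.factorial : ℝ) * M k) * (((k + 2).factorial : ℝ) * M (k + 2))

/-- `M` is non-quasianalytic: `∑ 1/(k! M k)^(1/k) < ∞`. -/
def NonQuasianalytic (M : ℕ → ℝ) : Prop :=
  Summable fun k : ℕ => 1 / (((k.factorial : ℝ) * M k) ^ ((1 : ℝ) / k))

/-! Put `F k = k! L_k`. Log-convexity of `F` makes `j ↦ F j F (k - j)` smallest at `j = ⌊k/2⌋`,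
so `k! L'_k = C^k F ⌊k/2⌋ F ⌈k/2⌉`, which is again log-convex. Since `F 0 = 1`, log-convexity
also makes `F p ^ (1/p)` increasing, so the `k`-th root of `k! L'_k` dominates
`F ⌊k/2⌋ ^ (1/⌊k/2⌋)`, and every term of the series for `L` occurs at most twice in the resulting
majorant of the series for `L'`. -/

theorem Summable.comp_div_two {M : Type*} [AddCommMonoid M] [TopologicalSpace M]
    [ContinuousAdd M] {f : ℕ → M} (hf : Summable f) : Summable fun n => f (n / 2) :=
  Summable.even_add_odd (by simpa using hf) (by simpa [Nat.mul_add_div] using hf)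

theorem Real.rpow_one_div_le_of_pow_le {x y : ℝ} (hx : 0 ≤ x) (hy : 0 ≤ y) {p k : ℕ}
    (hp : p ≠ 0) (hk : k ≠ 0) (h : x ^ k ≤ y ^ p) : x ^ ((1 : ℝ) / p) ≤ y ^ ((1 : ℝ) / k) := by
  have hp' : (p : ℝ) ≠ 0 := Nat.cast_ne_zero.mpr hp
  have hk' : (k : ℝ) ≠ 0 := Nat.cast_ne_zero.mpr hk
  calc x ^ ((1 : ℝ) / p) = (x ^ k) ^ ((1 : ℝ) / (p * k)) := by
        rw [← Real.rpow_natCast, ← Real.rpow_mul hx]; field_simp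
    _ ≤ (y ^ p) ^ ((1 : ℝ) / (p * k)) := by gcongr
    _ = y ^ ((1 : ℝ) / k) := by
        rw [← Real.rpow_natCast, ← Real.rpow_mul hy]; field_simp

def minConv (C : ℝ) (F : ℕ → ℝ) (k : ℕ) : ℝ :=
  C ^ k * (Finset.range (k + 1)).inf' Finset.nonempty_range_add_one fun j => F j * F (k - j)

theorem minConv_le_pow_mul_mul {C : ℝ} (hC : 0 ≤ C) (F : ℕ → ℝ) (j k : ℕ) :
    minConv C F (j + k) ≤ C ^ (j + k) * F j * F k := by
  have hmin := Finset.inf'_le (fun i => F i * F (j + k - i))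
    (Finset.mem_range.mpr (by omega : j < j + k + 1))
  rw [Nat.add_sub_cancel_left] at hmin
  rw [minConv, mul_assoc]
  gcongr

theorem le_minConv {C : ℝ} (hC : 0 ≤ C) {G F : ℕ → ℝ} (hG0 : ∀ k, 0 ≤ G k) (hGF : ∀ k, G k ≤ F k)
    (hG : ∀ j k, G (j + k) ≤ C ^ (j + k) * G j * G k) (k : ℕ) : G k ≤ minConv C F k := by
  obtain ⟨j, hj, hmin⟩ := Finset.exists_mem_eq_inf' Finset.nonempty_range_add_one
    fun j => F j * F (k - j)
  have hjk : j + (k - j) = k := Nat.add_sub_cancel' (Nat.lt_succ_iff.mp (Finset.mem_range.mp hj))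
  have := hG0 (k - j); have := (hG0 j).trans (hGF j)
  calc G k ≤ C ^ k * G j * G (k - j) := by simpa only [hjk] using hG j (k - j)
    _ ≤ C ^ k * F j * F (k - j) := by gcongr <;> exact hGF _
    _ = minConv C F k := by rw [minConv, hmin, mul_assoc]

theorem le_pow_mul_mul_of_factorial_mul {C : ℝ} (hC : 0 ≤ C) {M L : ℕ → ℝ} (hL : ∀ k, 0 ≤ L k)
    {j k : ℕ} (h : ((j + k).factorial : ℝ) * M (j + k) ≤
      C ^ (j + k) * ((j.factorial : ℝ) * L j) * ((k.factorial : ℝ) * L k)) :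
    M (j + k) ≤ C ^ (j + k) * L j * L k := by
  have hfac : (j.factorial : ℝ) * k.factorial ≤ (j + k).factorial := by
    exact_mod_cast Nat.le_of_dvd (Nat.factorial_pos _)
      (Nat.factorial_mul_factorial_dvd_factorial_add j k)
  refine le_of_mul_le_mul_left ?_ (by positivity : (0 : ℝ) < (j + k).factorial)
  have := hL j; have := hL k
  calc ((j + k).factorial : ℝ) * M (j + k)
      ≤ (j.factorial * k.factorial : ℝ) * (C ^ (j + k) * L j * L k) := h.trans_eq (by ring)
    _ ≤ (j + k).factorial * (C ^ (j + k) * L j * L k) := by gcongr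

def LogConvexSeq (F : ℕ → ℝ) : Prop :=
  ∀ k, F (k + 1) ^ 2 ≤ F k * F (k + 2)

namespace LogConvexSeq

variable {F : ℕ → ℝ} (hF : LogConvexSeq F)
include hF

theorem mul_geometric (c : ℝ) :
    LogConvexSeq fun k => c ^ k * F k := by
  intro k
  calc (c ^ (k + 1) * F (k + 1)) ^ 2 = c ^ (2 * k + 2) * F (k + 1) ^ 2 := by ring
    _ ≤ c ^ (2 * k + 2) * (F k * F (k + 2)) := by
        gcongr
        · exact (even_two_mul (k + 1)).pow_nonneg c
        · exact hF k
    _ = c ^ k * F k * (c ^ (k + 2) * F (k + 2)) := by ring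

theorem halves :
    LogConvexSeq fun k => F (k / 2) * F (k - k / 2) := by
  intro k
  obtain ⟨n, rfl | rfl⟩ := Nat.even_or_odd' k <;> dsimp only
  · rw [show 2 * n / 2 = n by omega, show 2 * n - n = n by omega,
      show (2 * n + 1) / 2 = n by omega, show 2 * n + 1 - n = n + 1 by omega,
      show (2 * n + 2) / 2 = n + 1 by omega, show 2 * n + 2 - (n + 1) = n + 1 by omega]
    exact le_of_eq (by ring)
  · rw [show (2 * n + 1) / 2 = n by omega, show 2 * n + 1 - n = n + 1 by omega,
      show (2 * n + 1 + 1) / 2 = n + 1 by omega, show 2 * n + 1 + 1 - (n + 1) = n + 1 by omega,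
      show (2 * n + 1 + 2) / 2 = n + 1 by omega, show 2 * n + 1 + 2 - (n + 1) = n + 2 by omega]
    calc (F (n + 1) * F (n + 1)) ^ 2 = F (n + 1) ^ 2 * F (n + 1) ^ 2 := by ring
      _ ≤ F n * F (n + 2) * F (n + 1) ^ 2 := by gcongr; exact hF n
      _ = F n * F (n + 1) * (F (n + 1) * F (n + 2)) := by ring

variable (hpos : ∀ k, 0 < F k)
include hpos

theorem ratio_monotone : Monotone fun k => F (k + 1) / F k := by
  refine monotone_nat_of_le_succ fun k => ?_
  rw [div_le_div_iff₀ (hpos k) (hpos (k + 1)), ← sq]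
  exact (hF k).trans_eq (mul_comm _ _)

theorem div_le_div_add (t : ℕ) {a b : ℕ} (hab : a ≤ b) : F (a + t) / F a ≤ F (b + t) / F b := by
  induction t with
  | zero => simp [div_self (hpos a).ne', div_self (hpos b).ne']
  | succ t ih =>
    calc F (a + t + 1) / F a = F (a + t + 1) / F (a + t) * (F (a + t) / F a) :=
          (div_mul_div_cancel₀ (hpos _).ne').symm
      _ ≤ F (b + t + 1) / F (b + t) * (F (b + t) / F b) :=
          mul_le_mul (hF.ratio_monotone hpos (by omega)) ih (div_pos (hpos _) (hpos _)).le
            (div_pos (hpos _) (hpos _)).le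
      _ = F (b + t + 1) / F b := div_mul_div_cancel₀ (hpos _).ne'

theorem mul_le_mul_add (t : ℕ) {a b : ℕ} (hab : a ≤ b) : F (a + t) * F b ≤ F a * F (b + t) :=
  ((div_le_div_iff₀ (hpos a) (hpos b)).mp (hF.div_le_div_add hpos t hab)).trans_eq (mul_comm _ _)

theorem mul_halves_le {j k : ℕ} (hjk : j ≤ k) : F (k / 2) * F (k - k / 2) ≤ F j * F (k - j) := by
  rcases le_or_gt j (k / 2) with h | h
  · have := hF.mul_le_mul_add hpos (k / 2 - j) (show j ≤ k - k / 2 by omega)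
    rwa [show j + (k / 2 - j) = k / 2 by omega, show k - k / 2 + (k / 2 - j) = k - j by omega]
      at this
  · have := hF.mul_le_mul_add hpos (k / 2 - (k - j)) (show k - j ≤ k - k / 2 by omega)
    rw [show k - j + (k / 2 - (k - j)) = k / 2 by omega,
      show k - k / 2 + (k / 2 - (k - j)) = j by omega] at this
    exact this.trans_eq (mul_comm _ _)

theorem minConv_eq (C : ℝ) (k : ℕ) : minConv C F k = C ^ k * (F (k / 2) * F (k - k / 2)) :=
  congrArg _ <| le_antisymm (Finset.inf'_le _ (Finset.mem_range.mpr (by omega)))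
    (Finset.le_inf' _ _ fun _ hj =>
      hF.mul_halves_le hpos (Nat.lt_succ_iff.mp (Finset.mem_range.mp hj)))

theorem le_ratio_pow (h0 : F 0 = 1) (k : ℕ) : F k ≤ (F (k + 1) / F k) ^ k := by
  induction k with
  | zero => simp [h0]
  | succ k ih =>
    calc F (k + 1) = F (k + 1) / F k * F k := (div_mul_cancel₀ _ (hpos k).ne').symm
      _ ≤ F (k + 1) / F k * (F (k + 1) / F k) ^ k := by
          gcongr; exact (div_pos (hpos _) (hpos _)).le
      _ = (F (k + 1) / F k) ^ (k + 1) := by ring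
      _ ≤ (F (k + 2) / F (k + 1)) ^ (k + 1) :=
          pow_le_pow_left₀ (div_pos (hpos _) (hpos _)).le (hF.ratio_monotone hpos k.le_succ) _

theorem pow_succ_le_pow (h0 : F 0 = 1) (k : ℕ) : F k ^ (k + 1) ≤ F (k + 1) ^ k := by
  calc F k ^ (k + 1) = F k ^ k * F k := pow_succ _ _
    _ ≤ F k ^ k * (F (k + 1) / F k) ^ k := by
        gcongr
        · exact (pow_pos (hpos k) k).le
        · exact hF.le_ratio_pow hpos h0 k
    _ = F (k + 1) ^ k := by rw [← mul_pow, mul_div_cancel₀ _ (hpos k).ne']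

theorem pow_le_pow_of_le (h0 : F 0 = 1) {p q : ℕ} (hpq : p ≤ q) : F p ^ q ≤ F q ^ p := by
  rcases Nat.eq_zero_or_pos p with rfl | hp
  · simp [h0]
  induction q, hpq using Nat.le_induction with
  | base => rfl
  | succ q hpq ih =>
    have hq : q ≠ 0 := by omega
    refine le_of_pow_le_pow_left₀ hq (pow_pos (hpos _) _).le ?_
    calc (F p ^ (q + 1)) ^ q = (F p ^ q) ^ (q + 1) := by ring
      _ ≤ (F q ^ p) ^ (q + 1) := pow_le_pow_left₀ (pow_pos (hpos p) q).le ih _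
      _ = (F q ^ (q + 1)) ^ p := by ring
      _ ≤ (F (q + 1) ^ q) ^ p := by
          gcongr
          · exact (pow_pos (hpos q) _).le
          · exact hF.pow_succ_le_pow hpos h0 q
      _ = (F (q + 1) ^ p) ^ q := by ring

theorem rpow_le_geometric_mul_halves (h0 : F 0 = 1) {C : ℝ} (hC : 1 ≤ C) {k : ℕ} (hk : 2 ≤ k) :
    F (k / 2) ^ ((1 : ℝ) / (k / 2 : ℕ)) ≤
      (C ^ k * (F (k / 2) * F (k - k / 2))) ^ ((1 : ℝ) / k) := by
  set p := k / 2
  set q := k - k / 2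
  have hpq : p ≤ q := by omega
  have hFp := hpos p
  have hFq := hpos q
  refine Real.rpow_one_div_le_of_pow_le hFp.le (by positivity) (by omega) (by omega) ?_
  calc F p ^ k = F p ^ p * F p ^ q := by rw [← pow_add, Nat.add_sub_cancel' (Nat.div_le_self k 2)]
    _ ≤ F p ^ p * F q ^ p := by gcongr; exact hF.pow_le_pow_of_le hpos h0 hpq
    _ = (1 * (F p * F q)) ^ p := by ring
    _ ≤ (C ^ k * (F p * F q)) ^ p := by gcongr; exact one_le_pow₀ hC

theorem summable_geometric_mul_halves (h0 : F 0 = 1) {C : ℝ} (hC : 1 ≤ C)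
    (hsum : Summable fun k : ℕ => 1 / F k ^ ((1 : ℝ) / k)) :
    Summable fun k : ℕ => 1 / (C ^ k * (F (k / 2) * F (k - k / 2))) ^ ((1 : ℝ) / k) := by
  refine (summable_nat_add_iff 2).mp <|
    Summable.of_nonneg_of_le (fun n => ?_) (fun n => ?_)
      ((summable_nat_add_iff 2).mpr hsum.comp_div_two)
  · have := hpos ((n + 2) / 2); have := hpos (n + 2 - (n + 2) / 2)
    have : 0 ≤ C := zero_le_one.trans hC
    positivity
  · exact one_div_le_one_div_of_le (Real.rpow_pos_of_pos (hpos _) _)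
      (hF.rpow_le_geometric_mul_halves hpos h0 hC (by omega))

end LogConvexSeq

theorem stmt11_general (Q L L' : ℕ → ℝ) (C : ℝ)
    (hQpos : ∀ k, 0 < Q k)
    (hC1 : 1 ≤ C)
    (hC : ∀ j k : ℕ, ((j + k).factorial : ℝ) * Q (j + k) ≤
      C ^ (j + k) * ((j.factorial : ℝ) * Q j) * ((k.factorial : ℝ) * Q k))
    (hLpos : ∀ k, 0 < L k) (hL0 : L 0 = 1)
    (hLw : WeaklyLogConvex L) (hLnq : NonQuasianalytic L)
    (hQL : ∀ k, Q k ≤ L k)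
    (hL' : ∀ k, (k.factorial : ℝ) * L' k =
      C ^ k * (Finset.range (k + 1)).inf' Finset.nonempty_range_add_one
        (fun j => ((j.factorial : ℝ) * L j) * (((k - j).factorial : ℝ) * L (k - j)))) :
    (∀ k, Q k ≤ L' k) ∧ WeaklyLogConvex L' ∧
    (∀ j k, L' (j + k) ≤ C ^ (j + k) * L j * L k) ∧ NonQuasianalytic L' := by
  have hC0 : 0 ≤ C := zero_le_one.trans hC1
  set F : ℕ → ℝ := fun m => (m.factorial : ℝ) * L m
  have hF : LogConvexSeq F := hLw
  have hFpos : ∀ m, 0 < F m := fun m => mul_pos (by positivity) (hLpos m)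
  have hF0 : F 0 = 1 := by simp [F, hL0]
  have hL'_eq : ∀ k, (k.factorial : ℝ) * L' k = C ^ k * (F (k / 2) * F (k - k / 2)) :=
    fun k => (hL' k).trans (hF.minConv_eq hFpos C k)
  refine ⟨fun k => ?_, ?_, fun j k => ?_, ?_⟩
  · have hQF : ∀ k, (k.factorial : ℝ) * Q k ≤ F k :=
      fun k => mul_le_mul_of_nonneg_left (hQL k) (by positivity)
    have hQk := le_minConv hC0 (fun k => (mul_pos (by positivity) (hQpos k)).le) hQF hC k
    exact le_of_mul_le_mul_left (hQk.trans_eq (hL' k).symm) (by positivity)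
  · show LogConvexSeq fun k => (k.factorial : ℝ) * L' k
    simpa only [hL'_eq] using hF.halves.mul_geometric C
  · exact le_pow_mul_mul_of_factorial_mul hC0 (fun k => (hLpos k).le)
      ((hL' _).trans_le (minConv_le_pow_mul_mul hC0 F j k))
  · show Summable fun k : ℕ => 1 / ((k.factorial : ℝ) * L' k) ^ ((1 : ℝ) / k)
    simpa only [hL'_eq] using hF.summable_geometric_mul_halves hFpos hF0 hC1 hLnq

/-- For `Q` weakly log-convex of moderate growth (with constant `C`) and
`L ≥ Q` weakly log-convex non-quasianalytic with `L 0 = 1`, the sequence `L'`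
given by `k! L'_k = C^k min_{0 ≤ j ≤ k} (j! L_j) ((k-j)! L_{k-j})` satisfies:
`L' ≥ Q`; `k! L'_k` is log-convex; `L'_{j+k} ≤ C^{j+k} L_j L_k`; and `L'` is
non-quasianalytic. -/
theorem stmt11 (Q L L' : ℕ → ℝ) (C : ℝ)
    (hQpos : ∀ k, 0 < Q k) (hQ0 : Q 0 = 1) (hQw : WeaklyLogConvex Q)
    (hC1 : 1 ≤ C)
    (hC : ∀ j k : ℕ, ((j + k).factorial : ℝ) * Q (j + k) ≤
      C ^ (j + k) * ((j.factorial : ℝ) * Q j) * ((k.factorial : ℝ) * Q k))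
    (hLpos : ∀ k, 0 < L k) (hL0 : L 0 = 1)
    (hLw : WeaklyLogConvex L) (hLnq : NonQuasianalytic L)
    (hQL : ∀ k, Q k ≤ L k)
    (hL' : ∀ k, (k.factorial : ℝ) * L' k =
      C ^ k * (Finset.range (k + 1)).inf' Finset.nonempty_range_add_one
        (fun j => ((j.factorial : ℝ) * L j) * (((k - j).factorial : ℝ) * L (k - j)))) :
    (∀ k, Q k ≤ L' k) ∧ WeaklyLogConvex L' ∧
    (∀ j k, L' (j + k) ≤ C ^ (j + k) * L j * L k) ∧ NonQuasianalytic L' :=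
  stmt11_general Q L L' C hQpos hC1 hC hLpos hL0 hLw hLnq hQL hL'
end

section
/- Let L be a non-quasianalytic log-convex weight sequence with L_0 = 1, and set α_k := (k!L_k)^{1/k}/k. Then for s ≤ k, α_s/α_k ≤ 2e; and consequently, since Σ 1/(kα_k) < ∞, the quantity (log k)/α_k = k·log(k)/(k!L_k)^{1/k} is bounded in k. -/
/-!
Log-convexity together with `L 0 = 1` makes `L k ^ (1/k)` nondecreasing, and
`k / e ≤ (k !) ^ (1/k) ≤ k`. Writing `α k = (k ! * L k) ^ (1/k) / k`, this gives
`α s ≤ L s ^ (1/s) ≤ L k ^ (1/k) ≤ e * α k` for `1 ≤ s ≤ k`. Hence the terms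
`1 / (s * α s) ≥ 1 / (e * α k * s)` of the convergent series with `√k < s ≤ k` add up to at least
`(log k / 2 - 1) / (e * α k)`, which bounds `log k / α k`; the error term is controlled by
`α k ≥ α 1 / e` (the case `s = 1`).
-/

open Real Finset
open scoped Nat

theorem factorial_rpow_one_div_le {k : ℕ} (hk : 0 < k) : (k ! : ℝ) ^ ((1 : ℝ) / k) ≤ k := by
  rw [one_div, rpow_inv_le_iff_of_pos (by positivity) (by positivity) (by exact_mod_cast hk),
    rpow_natCast]
  exact_mod_cast k.factorial_le_pow

theorem div_exp_one_le_factorial_rpow {k : ℕ} (hk : 0 < k) :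
    k / exp 1 ≤ (k ! : ℝ) ^ ((1 : ℝ) / k) := by
  rw [one_div, le_rpow_inv_iff_of_pos (by positivity) (by positivity) (by exact_mod_cast hk),
    rpow_natCast, div_pow, div_le_iff₀ (by positivity), ← exp_nat_mul, mul_one,
    ← div_le_iff₀' (by positivity)]
  exact pow_div_factorial_le_exp _ (Nat.cast_nonneg k) k

theorem factorial_mul_rpow_div_le {k : ℕ} (hk : 0 < k) {x : ℝ} (hx : 0 ≤ x) :
    ((k ! : ℝ) * x) ^ ((1 : ℝ) / k) / k ≤ x ^ ((1 : ℝ) / k) := by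
  rw [div_le_iff₀ (by exact_mod_cast hk), mul_rpow (by positivity) hx, mul_comm _ (k : ℝ)]
  exact mul_le_mul_of_nonneg_right (factorial_rpow_one_div_le hk) (by positivity)

theorem rpow_le_exp_one_mul_factorial_mul_rpow_div {k : ℕ} (hk : 0 < k) {x : ℝ} (hx : 0 ≤ x) :
    x ^ ((1 : ℝ) / k) ≤ exp 1 * (((k ! : ℝ) * x) ^ ((1 : ℝ) / k) / k) := by
  have hk' : (0 : ℝ) < k := by exact_mod_cast hk
  calc x ^ ((1 : ℝ) / k) = exp 1 * (k / exp 1 * x ^ ((1 : ℝ) / k) / k) := by field_simp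
    _ ≤ exp 1 * ((k ! : ℝ) ^ ((1 : ℝ) / k) * x ^ ((1 : ℝ) / k) / k) := by
        gcongr
        exact div_exp_one_le_factorial_rpow hk
    _ = exp 1 * (((k ! : ℝ) * x) ^ ((1 : ℝ) / k) / k) := by rw [mul_rpow (by positivity) hx]

theorem pow_succ_le_pow_of_logConvex {L : ℕ → ℝ} (hpos : ∀ k, 0 < L k) (hL0 : L 0 ≤ 1)
    (hlc : ∀ k, L (k + 1) ^ 2 ≤ L k * L (k + 2)) (k : ℕ) : L k ^ (k + 1) ≤ L (k + 1) ^ k := by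
  induction k with
  | zero => simpa using hL0
  | succ n ih =>
    refine le_of_mul_le_mul_right ?_ (pow_pos (hpos (n + 1)) n)
    calc L (n + 1) ^ (n + 2) * L (n + 1) ^ n = (L (n + 1) ^ 2) ^ (n + 1) := by ring
      _ ≤ (L n * L (n + 2)) ^ (n + 1) := pow_le_pow_left₀ (sq_nonneg _) (hlc n) _
      _ = L n ^ (n + 1) * L (n + 2) ^ (n + 1) := mul_pow _ _ _
      _ ≤ L (n + 1) ^ n * L (n + 2) ^ (n + 1) :=
          mul_le_mul_of_nonneg_right ih (pow_pos (hpos _) _).le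
      _ = L (n + 2) ^ (n + 1) * L (n + 1) ^ n := mul_comm _ _

theorem rpow_one_div_le_succ_of_logConvex {L : ℕ → ℝ} (hpos : ∀ k, 0 < L k) (hL0 : L 0 ≤ 1)
    (hlc : ∀ k, L (k + 1) ^ 2 ≤ L k * L (k + 2)) {k : ℕ} (hk : 0 < k) :
    L k ^ ((1 : ℝ) / k) ≤ L (k + 1) ^ ((1 : ℝ) / ↑(k + 1)) := by
  have hk' : (0 : ℝ) < k := by exact_mod_cast hk
  have e1 : (1 : ℝ) / k = ((k + 1 : ℕ) : ℝ) * (1 / (k * (k + 1))) := by push_cast; field_simp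
  have e2 : (1 : ℝ) / ↑(k + 1) = (k : ℝ) * (1 / (k * (k + 1))) := by push_cast; field_simp
  rw [e1, e2, rpow_natCast_mul (hpos k).le, rpow_natCast_mul (hpos (k + 1)).le]
  exact rpow_le_rpow (pow_pos (hpos k) _).le (pow_succ_le_pow_of_logConvex hpos hL0 hlc k)
    (by positivity)

theorem rpow_one_div_le_of_logConvex {L : ℕ → ℝ} (hpos : ∀ k, 0 < L k) (hL0 : L 0 ≤ 1)
    (hlc : ∀ k, L (k + 1) ^ 2 ≤ L k * L (k + 2)) {s k : ℕ} (hs : 1 ≤ s) (hsk : s ≤ k) :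
    L s ^ ((1 : ℝ) / s) ≤ L k ^ ((1 : ℝ) / k) := by
  induction k, hsk using Nat.le_induction with
  | base => exact le_rfl
  | succ n _ ih => exact ih.trans (rpow_one_div_le_succ_of_logConvex hpos hL0 hlc (by omega))

theorem factorial_mul_rpow_div_le_exp_one_mul_of_logConvex {L : ℕ → ℝ} (hpos : ∀ k, 0 < L k)
    (hL0 : L 0 ≤ 1) (hlc : ∀ k, L (k + 1) ^ 2 ≤ L k * L (k + 2)) {s k : ℕ} (hs : 1 ≤ s)
    (hsk : s ≤ k) :
    ((s ! : ℝ) * L s) ^ ((1 : ℝ) / s) / s ≤ exp 1 * (((k ! : ℝ) * L k) ^ ((1 : ℝ) / k) / k) :=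
  calc ((s ! : ℝ) * L s) ^ ((1 : ℝ) / s) / s ≤ L s ^ ((1 : ℝ) / s) :=
        factorial_mul_rpow_div_le hs (hpos s).le
    _ ≤ L k ^ ((1 : ℝ) / k) := rpow_one_div_le_of_logConvex hpos hL0 hlc hs hsk
    _ ≤ exp 1 * (((k ! : ℝ) * L k) ^ ((1 : ℝ) / k) / k) :=
        rpow_le_exp_one_mul_factorial_mul_rpow_div (hs.trans hsk) (hpos k).le

theorem log_add_one_sub_one_sub_log_le_sum_Ioc {j k : ℕ} (hjk : j ≤ k) :
    log (k + 1) - 1 - log j ≤ ∑ s ∈ Ioc j k, (s : ℝ)⁻¹ := by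
  have hsplit : ∑ s ∈ Ioc j k, (s : ℝ)⁻¹ = harmonic k - harmonic j := by
    have h := sum_Ioc_consecutive (fun s : ℕ => (s : ℝ)⁻¹) (Nat.zero_le j) hjk
    rw [← Icc_add_one_left_eq_Ioc 0 j, ← Icc_add_one_left_eq_Ioc 0 k, zero_add] at h
    simp only [harmonic_eq_sum_Icc, Rat.cast_sum, Rat.cast_inv, Rat.cast_natCast]
    linarith
  have hk := log_add_one_le_harmonic k
  push_cast at hk
  linarith [harmonic_le_one_add_log j]

theorem log_div_two_sub_one_le_sum_Ioc_sqrt {k : ℕ} (hk : 0 < k) :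
    log k / 2 - 1 ≤ ∑ s ∈ Ioc k.sqrt k, (s : ℝ)⁻¹ := by
  have hk' : (0 : ℝ) < k := by exact_mod_cast hk
  have hsqrt : log k.sqrt ≤ log k / 2 := by
    rw [← log_sqrt hk'.le]
    refine log_le_log (by simpa using Nat.sqrt_pos.mpr hk) ?_
    rw [Real.le_sqrt (by positivity) (by positivity)]
    exact_mod_cast Nat.sqrt_le' k
  have hlog : log k ≤ log (k + 1) := log_le_log hk' (by linarith)
  linarith [log_add_one_sub_one_sub_log_le_sum_Ioc (Nat.sqrt_le_self k)]

theorem exists_mul_log_div_le_of_summable_one_div {a : ℕ → ℝ} {C : ℝ} (ha : ∀ k, 0 < a k)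
    (hsum : Summable fun k => 1 / a k)
    (hreg : ∀ s k : ℕ, 1 ≤ s → s ≤ k → a s / s ≤ C * (a k / k)) :
    ∃ B : ℝ, ∀ k : ℕ, 1 ≤ k → k * log k / a k ≤ B := by
  set S := ∑' k, 1 / a k
  have hC : 0 < C := by
    have h := hreg 1 1 le_rfl le_rfl
    simp only [Nat.cast_one, div_one] at h
    nlinarith [ha 1]
  refine ⟨2 * C * S + 2 * C / a 1, fun k hk => ?_⟩
  set β := C * (a k / k)
  have hβ : a 1 ≤ β := by simpa using hreg 1 k le_rfl hk
  have hβpos : 0 < β := (ha 1).trans_le hβ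
  have hharm : ∑ s ∈ Ioc k.sqrt k, (s : ℝ)⁻¹ ≤ β * S := by
    calc ∑ s ∈ Ioc k.sqrt k, (s : ℝ)⁻¹ ≤ ∑ s ∈ Ioc k.sqrt k, β * (1 / a s) := by
          refine sum_le_sum fun s hs => ?_
          rw [mem_Ioc] at hs
          have hs' : (0 : ℝ) < s := by exact_mod_cast hs.1.trans_le' (Nat.zero_le _)
          calc (s : ℝ)⁻¹ = a s / s * (1 / a s) := by field_simp [(ha s).ne']
            _ ≤ β * (1 / a s) := by
              gcongr
              · exact (one_div_pos.2 (ha s)).le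
              · exact hreg s k (by omega) hs.2
      _ = β * ∑ s ∈ Ioc k.sqrt k, 1 / a s := (mul_sum _ _ _).symm
      _ ≤ β * S := by
          gcongr
          exact hsum.sum_le_tsum _ fun i _ => (one_div_pos.2 (ha i)).le
  have hlog : log k / β ≤ 2 * S + 2 / a 1 :=
    calc log k / β ≤ (2 * β * S + 2) / β := by
          gcongr
          linarith [log_div_two_sub_one_le_sum_Ioc_sqrt hk]
      _ = 2 * S + 2 / β := by field_simp
      _ ≤ 2 * S + 2 / a 1 := by gcongr; exact ha 1
  calc k * log k / a k = C * (log k / β) := by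
        have hk' : (0 : ℝ) < k := by exact_mod_cast hk
        simp only [β]
        field_simp [hC.ne']
    _ ≤ C * (2 * S + 2 / a 1) := by gcongr
    _ = 2 * C * S + 2 * C / a 1 := by ring

theorem stmt14_general (L : ℕ → ℝ) (hpos : ∀ k, 0 < L k) (hL0 : L 0 = 1)
    (hlc : ∀ k, 1 ≤ k → (L k) ^ 2 ≤ L (k - 1) * L (k + 1))
    (hnq : Summable fun k : ℕ => 1 / (((k.factorial : ℝ) * L k) ^ ((1 : ℝ) / k))) :
    (∀ s k : ℕ, 1 ≤ s → s ≤ k →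
      (((s.factorial : ℝ) * L s) ^ ((1 : ℝ) / s) / s) /
        (((k.factorial : ℝ) * L k) ^ ((1 : ℝ) / k) / k) ≤ 2 * Real.exp 1) ∧
    ∃ B : ℝ, ∀ k : ℕ, 1 ≤ k →
      (k : ℝ) * Real.log k / (((k.factorial : ℝ) * L k) ^ ((1 : ℝ) / k)) ≤ B := by
  have hlc' (k : ℕ) : L (k + 1) ^ 2 ≤ L k * L (k + 2) := by simpa using hlc (k + 1) (by omega)
  have hA (k : ℕ) : 0 < ((k ! : ℝ) * L k) ^ ((1 : ℝ) / k) :=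
    rpow_pos_of_pos (mul_pos (by positivity) (hpos k)) _
  have hreg (s k : ℕ) (hs : 1 ≤ s) (hsk : s ≤ k) :=
    factorial_mul_rpow_div_le_exp_one_mul_of_logConvex hpos hL0.le hlc' hs hsk
  refine ⟨fun s k hs hsk => ?_, exists_mul_log_div_le_of_summable_one_div hA hnq hreg⟩
  have hk : (0 : ℝ) < k := by exact_mod_cast hs.trans hsk
  have hαk := div_pos (hA k) hk
  rw [div_le_iff₀ hαk]
  exact (hreg s k hs hsk).trans (by gcongr; linarith [exp_pos 1])

/-- For a non-quasianalytic weight sequence `L` with `α k = (k! L k)^(1/k) / k`: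
`α s / α k ≤ 2e` for `1 ≤ s ≤ k`, and `k log k / (k! L k)^(1/k)` is bounded. -/
theorem stmt14 (L : ℕ → ℝ) (hpos : ∀ k, 0 < L k) (hL0 : L 0 = 1) (hL1 : 1 ≤ L 1)
    (hlc : ∀ k, 1 ≤ k → (L k) ^ 2 ≤ L (k - 1) * L (k + 1))
    (hnq : Summable fun k : ℕ => 1 / (((k.factorial : ℝ) * L k) ^ ((1 : ℝ) / k))) :
    (∀ s k : ℕ, 1 ≤ s → s ≤ k →
      (((s.factorial : ℝ) * L s) ^ ((1 : ℝ) / s) / s) /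
        (((k.factorial : ℝ) * L k) ^ ((1 : ℝ) / k) / k) ≤ 2 * Real.exp 1) ∧
    ∃ B : ℝ, ∀ k : ℕ, 1 ≤ k →
      (k : ℝ) * Real.log k / (((k.factorial : ℝ) * L k) ^ ((1 : ℝ) / k)) ≤ B :=
  stmt14_general L hpos hL0 hlc hnq
end
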